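/- arXiv:1909.13727 — 3 statements merged into one kernel-verified Lean document; each statement's English description precedes it below -/
import Mathlib

section
/- For every integer k ≥ 4, the quantity a_k := (∑_{i=1}^k 1/i)^{-1} + ∑_{j=1}^{k-1} ( (j+1) ∑_{i=1}^j 1/i )^{-1} satisfies log(1 + log(k+1)) − log(1 + log 3) + 1/(1 + log k) ≤ a_k ≤ 13/18 + log(log k) + 1/log(k+1). -/
open Finset Real

/-- abbreviation for the partial harmonic sum appearing in the statement -/
noncomputable def Hs (n : ℕ) : ℝ := ∑ i ∈ Finset.Icc 1 n, (1 : ℝ) / i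

lemma Hs_eq_harmonic (n : ℕ) : Hs n = (harmonic n : ℝ) := by
  simp [Hs, harmonic_eq_sum_Icc, one_div]

lemma Hs_lower (n : ℕ) : Real.log (n + 1) ≤ Hs n := by
  rw [Hs_eq_harmonic]
  have := log_add_one_le_harmonic n
  rwa [Nat.cast_add, Nat.cast_one] at this

lemma Hs_upper (n : ℕ) : Hs n ≤ 1 + Real.log n := by
  rw [Hs_eq_harmonic]; exact harmonic_le_one_add_log n

lemma Hs_pos {n : ℕ} (hn : 1 ≤ n) : 0 < Hs n := by
  rw [Hs_eq_harmonic]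
  exact_mod_cast harmonic_pos (by omega)

lemma telescope_Icc (f : ℕ → ℝ) : ∀ n : ℕ, ∀ m : ℕ, m ≤ n + 1 →
    ∑ j ∈ Finset.Icc m n, (f (j + 1) - f j) = f (n + 1) - f m := by
  intro n
  induction n with
  | zero =>
      intro m hm
      rcases (by omega : m = 0 ∨ m = 1) with h | h <;> subst h <;> simp
  | succ n ih =>
      intro m hm
      rcases Nat.lt_or_ge m (n + 2) with h | h
      · have hmn : m ≤ n + 1 := by omega
        rw [Finset.sum_Icc_succ_top hmn, ih m hmn]
        ring
      · have hm' : m = n + 2 := by omega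
        subst hm'
        simp

/-- per-term lower bound, for `j ≥ 1`. -/
lemma term_lower {j : ℕ} (hj : 1 ≤ j) :
    Real.log (1 + Real.log (j + 2)) - Real.log (1 + Real.log (j + 1)) ≤
      ((j + 1 : ℝ) * Hs j)⁻¹ := by
  have hj1 : (1 : ℝ) ≤ (j : ℝ) := by exact_mod_cast hj
  have hl1 : (0 : ℝ) ≤ Real.log (j + 1) := Real.log_nonneg (by linarith)
  have hA : (0 : ℝ) < 1 + Real.log (j + 1) := by linarith
  have hl2 : Real.log (j + 1) ≤ Real.log (j + 2) := by
    apply Real.log_le_log (by linarith)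
    linarith
  have hB : (0 : ℝ) < 1 + Real.log (j + 2) := by linarith
  -- log(B/A) ≤ B/A - 1
  have key : Real.log (1 + Real.log (j + 2)) - Real.log (1 + Real.log (j + 1)) ≤
      (Real.log (j + 2) - Real.log (j + 1)) / (1 + Real.log (j + 1)) := by
    rw [← Real.log_div (by positivity) (by positivity)]
    have h1 : Real.log ((1 + Real.log (j + 2)) / (1 + Real.log (j + 1))) ≤
        (1 + Real.log (j + 2)) / (1 + Real.log (j + 1)) - 1 :=
      Real.log_le_sub_one_of_pos (by positivity)
    have h2 : (1 + Real.log (j + 2)) / (1 + Real.log (j + 1)) - 1 =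
        (Real.log (j + 2) - Real.log (j + 1)) / (1 + Real.log (j + 1)) := by
      field_simp
      ring
    linarith [h1, h2.le, h2.ge]
  have hstep : Real.log (j + 2) - Real.log (j + 1) ≤ 1 / (j + 1 : ℝ) := by
    have h1 : Real.log ((j + 2 : ℝ) / (j + 1)) ≤ (j + 2 : ℝ) / (j + 1) - 1 :=
      Real.log_le_sub_one_of_pos (by positivity)
    rw [Real.log_div (by positivity) (by positivity)] at h1
    have h2 : (j + 2 : ℝ) / (j + 1) - 1 = 1 / (j + 1 : ℝ) := by
      field_simp
      norm_num
    linarith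
  have hHs : Hs j ≤ 1 + Real.log (j + 1) := by
    refine (Hs_upper j).trans ?_
    have : Real.log (j : ℝ) ≤ Real.log (j + 1) :=
      Real.log_le_log (by linarith) (by linarith)
    linarith
  have hHpos : 0 < Hs j := Hs_pos hj
  have hjpos : (0 : ℝ) < (j : ℝ) + 1 := by linarith
  calc Real.log (1 + Real.log (j + 2)) - Real.log (1 + Real.log (j + 1))
      ≤ (Real.log (j + 2) - Real.log (j + 1)) / (1 + Real.log (j + 1)) := key
    _ ≤ (1 / (j + 1 : ℝ)) / (1 + Real.log (j + 1)) := by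
        gcongr
    _ = ((j + 1 : ℝ) * (1 + Real.log (j + 1)))⁻¹ := by
        rw [mul_inv]; field_simp
    _ ≤ ((j + 1 : ℝ) * Hs j)⁻¹ := by
        apply inv_anti₀ (by positivity)
        exact mul_le_mul_of_nonneg_left hHs (by positivity)

/-- per-term upper bound, for `j ≥ 3`. -/
lemma term_upper {j : ℕ} (hj : 3 ≤ j) :
    ((j + 1 : ℝ) * Hs j)⁻¹ ≤
      Real.log (Real.log (j + 1)) - Real.log (Real.log j) := by
  have hj3 : (3 : ℝ) ≤ (j : ℝ) := by exact_mod_cast hj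
  have hlogj : (1 : ℝ) ≤ Real.log j := by
    rw [Real.le_log_iff_exp_le (by linarith)]
    have := Real.exp_one_lt_d9
    linarith
  have hlogj1 : Real.log j ≤ Real.log (j + 1) :=
    Real.log_le_log (by linarith) (by linarith)
  have hlj1pos : (0 : ℝ) < Real.log (j + 1) := by linarith
  -- log(j+1) - log j ≥ 1/(j+1)
  have hstep : 1 / (j + 1 : ℝ) ≤ Real.log (j + 1) - Real.log j := by
    have h1 : Real.log ((j : ℝ) / (j + 1)) ≤ (j : ℝ) / (j + 1) - 1 :=
      Real.log_le_sub_one_of_pos (by positivity)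
    rw [Real.log_div (by positivity) (by positivity)] at h1
    have h2 : (j : ℝ) / (j + 1) - 1 = -(1 / (j + 1 : ℝ)) := by field_simp; ring
    linarith
  -- log(log(j+1)) - log(log j) ≥ (log(j+1) - log j)/log(j+1)
  have key : (Real.log (j + 1) - Real.log j) / Real.log (j + 1) ≤
      Real.log (Real.log (j + 1)) - Real.log (Real.log j) := by
    have h1 : Real.log (Real.log j / Real.log (j + 1)) ≤
        Real.log j / Real.log (j + 1) - 1 :=
      Real.log_le_sub_one_of_pos (by positivity)
    rw [Real.log_div (by positivity) (by positivity)] at h1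
    have h2 : Real.log j / Real.log (j + 1) - 1 =
        -((Real.log (j + 1) - Real.log j) / Real.log (j + 1)) := by
      field_simp
      ring
    linarith
  have hHs : Real.log (j + 1) ≤ Hs j := Hs_lower j
  have hHpos : 0 < Hs j := lt_of_lt_of_le hlj1pos hHs
  calc ((j + 1 : ℝ) * Hs j)⁻¹
      ≤ ((j + 1 : ℝ) * Real.log (j + 1))⁻¹ := by
        apply inv_anti₀ (by positivity)
        exact mul_le_mul_of_nonneg_left hHs (by positivity)
    _ = (1 / (j + 1 : ℝ)) / Real.log (j + 1) := by
        rw [mul_inv]; field_simp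
    _ ≤ (Real.log (j + 1) - Real.log j) / Real.log (j + 1) := by gcongr
    _ ≤ _ := key

theorem a_k_bounds (k : ℕ) (hk : 4 ≤ k) :
    Real.log (1 + Real.log (k + 1)) - Real.log (1 + Real.log 3) + 1 / (1 + Real.log k) ≤
      (∑ i ∈ Finset.Icc 1 k, (1 : ℝ) / i)⁻¹ +
        ∑ j ∈ Finset.Icc 1 (k - 1), ((j + 1 : ℝ) * ∑ i ∈ Finset.Icc 1 j, (1 : ℝ) / i)⁻¹ ∧
    (∑ i ∈ Finset.Icc 1 k, (1 : ℝ) / i)⁻¹ +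
        ∑ j ∈ Finset.Icc 1 (k - 1), ((j + 1 : ℝ) * ∑ i ∈ Finset.Icc 1 j, (1 : ℝ) / i)⁻¹ ≤
      13 / 18 + Real.log (Real.log k) + 1 / Real.log (k + 1) := by
  have hk4 : (4 : ℝ) ≤ (k : ℝ) := by exact_mod_cast hk
  have hkm : k - 1 + 1 = k := by omega
  -- rewrite sums using Hs
  have hmain : ∀ j : ℕ, (∑ i ∈ Finset.Icc 1 j, (1 : ℝ) / i) = Hs j := fun j => rfl
  rw [hmain]
  have hsum : (∑ j ∈ Finset.Icc 1 (k - 1), ((j + 1 : ℝ) * ∑ i ∈ Finset.Icc 1 j, (1 : ℝ) / i)⁻¹)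
      = ∑ j ∈ Finset.Icc 1 (k - 1), ((j + 1 : ℝ) * Hs j)⁻¹ := rfl
  rw [hsum]
  have hHkpos : 0 < Hs k := Hs_pos (by omega)
  have hlogk1 : (0 : ℝ) < Real.log (k + 1) := Real.log_pos (by linarith)
  have hlogk : (0 : ℝ) ≤ Real.log k := Real.log_nonneg (by linarith)
  constructor
  · -- lower bound
    have h1 : 1 / (1 + Real.log k) ≤ (Hs k)⁻¹ := by
      rw [one_div]
      apply inv_anti₀ hHkpos (Hs_upper k)
    have h2 : Real.log (1 + Real.log (k + 1)) - Real.log (1 + Real.log 2) ≤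
        ∑ j ∈ Finset.Icc 1 (k - 1), ((j + 1 : ℝ) * Hs j)⁻¹ := by
      have htel := telescope_Icc (fun j => Real.log (1 + Real.log (j + 1))) (k - 1) 1 (by omega)
      simp only [hkm] at htel
      have hle : ∑ j ∈ Finset.Icc 1 (k - 1),
          (Real.log (1 + Real.log ((j + 1 : ℕ) + 1)) - Real.log (1 + Real.log ((j : ℕ) + 1))) ≤
          ∑ j ∈ Finset.Icc 1 (k - 1), ((j + 1 : ℝ) * Hs j)⁻¹ := by
        apply Finset.sum_le_sum
        intro j hjmem
        have hj1 : 1 ≤ j := (Finset.mem_Icc.mp hjmem).1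
        have := term_lower hj1
        refine (le_of_eq ?_).trans this
        push_cast
        ring_nf
      rw [htel] at hle
      simp only [Nat.cast_one] at hle
      rw [show (1:ℝ) + 1 = 2 by norm_num] at hle
      exact hle
    have h3 : Real.log (1 + Real.log 2) ≤ Real.log (1 + Real.log 3) := by
      apply Real.log_le_log
      · have := Real.log_pos (by norm_num : (1:ℝ) < 2); linarith
      · have := Real.log_le_log (by norm_num : (0:ℝ) < 2) (by norm_num : (2:ℝ) ≤ 3)
        linarith
    linarith
  · -- upper bound
    have h1 : (Hs k)⁻¹ ≤ 1 / Real.log (k + 1) := by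
      rw [one_div]
      exact inv_anti₀ hlogk1 (Hs_lower k)
    -- split the sum at 2
    have hsplit : ∑ j ∈ Finset.Icc 1 (k - 1), ((j + 1 : ℝ) * Hs j)⁻¹ =
        (∑ j ∈ Finset.Ioc (0:ℕ) 2, (((j : ℝ) + 1) * Hs j)⁻¹) +
        ∑ j ∈ Finset.Ioc 2 (k - 1), (((j : ℝ) + 1) * Hs j)⁻¹ := by
      rw [Finset.sum_Ioc_consecutive _ (by omega : (0:ℕ) ≤ 2) (by omega : (2:ℕ) ≤ k - 1)]
      congr 1
    have hfirst : (∑ j ∈ Finset.Ioc (0:ℕ) 2, (((j : ℝ) + 1) * Hs j)⁻¹) = 13 / 18 := by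
      have : Finset.Ioc (0:ℕ) 2 = ({1, 2} : Finset ℕ) := by decide
      rw [this]
      have hH1 : Hs 1 = 1 := by simp [Hs]
      have hH2 : Hs 2 = 3 / 2 := by
        show (∑ i ∈ Finset.Icc (1:ℕ) 2, (1 : ℝ) / i) = 3 / 2
        rw [show Finset.Icc (1:ℕ) 2 = ({1, 2} : Finset ℕ) by decide]
        norm_num
      rw [Finset.sum_insert (by decide), Finset.sum_singleton, hH1, hH2]
      norm_num
    have hrest : ∑ j ∈ Finset.Ioc 2 (k - 1), (((j : ℝ) + 1) * Hs j)⁻¹ ≤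
        Real.log (Real.log k) - Real.log (Real.log 3) := by
      have htel := telescope_Icc (fun j => Real.log (Real.log j)) (k - 1) 3 (by omega)
      simp only [hkm] at htel
      have hIoc : Finset.Ioc 2 (k - 1) = Finset.Icc 3 (k - 1) :=
        (Finset.Icc_add_one_left_eq_Ioc 2 (k - 1)).symm
      rw [hIoc]
      have hle : ∑ j ∈ Finset.Icc 3 (k - 1), (((j : ℝ) + 1) * Hs j)⁻¹ ≤
          ∑ j ∈ Finset.Icc 3 (k - 1),
            (Real.log (Real.log ((j : ℕ) + 1)) - Real.log (Real.log (j : ℕ))) := by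
        apply Finset.sum_le_sum
        intro j hjmem
        have hj3 : 3 ≤ j := (Finset.mem_Icc.mp hjmem).1
        have := term_upper hj3
        convert this using 2 <;> push_cast <;> ring_nf
      refine hle.trans ?_
      push_cast at htel
      rw [htel]
    have hlog3 : (0 : ℝ) ≤ Real.log (Real.log 3) := by
      apply Real.log_nonneg
      rw [Real.le_log_iff_exp_le (by norm_num)]
      have := Real.exp_one_lt_d9
      linarith
    rw [hsplit, hfirst]
    linarith
end

section
/- Let V be binomially distributed with parameters n ≥ 1 and λ ∈ (0,1), and set X = n − V. Then E( V/(1+X) ) ≤ λ/(1−λ). -/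
/-!
The identity `v * C(n, v) = (n - v + 1) * C(n, v - 1)` cancels the denominator `1 + X = n - v + 1`
and shifts the binomial weight down by one at the cost of a factor `λ / (1 - λ)`. Hence
`E[V / (1 + X)] = λ / (1 - λ) * P(V < n) = λ / (1 - λ) * (1 - λ ^ n)`.
-/

/-- Expectation of `f V` for `V ~ Bin(n, lam)`. -/
noncomputable def binomExp (n : ℕ) (lam : ℝ) (f : ℕ → ℝ) : ℝ :=
  ∑ v ∈ Finset.range (n + 1), (n.choose v : ℝ) * lam ^ v * (1 - lam) ^ (n - v) * f v

open Finset

theorem sum_range_choose_mul_pow_mul_pow {R : Type*} [CommRing R] (p q : R) (n : ℕ) :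
    ∑ v ∈ range n, (n.choose v : R) * p ^ v * q ^ (n - v) = (p + q) ^ n - p ^ n := by
  rw [add_pow, sum_range_succ, Nat.choose_self, Nat.sub_self]
  simp only [Nat.cast_one, pow_zero, mul_one]
  rw [add_sub_cancel_right]
  exact sum_congr rfl fun v _ => by ring

theorem choose_succ_mul_pow_mul_div {K : Type*} [Field K] [CharZero K] {p q : K} (hq : q ≠ 0)
    {n v : ℕ} (hv : v < n) :
    (n.choose (v + 1) : K) * p ^ (v + 1) * q ^ (n - (v + 1)) *
        ((v + 1 : ℕ) / (1 + (n - (v + 1) : ℕ))) =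
      p / q * ((n.choose v : K) * p ^ v * q ^ (n - v)) := by
  obtain ⟨m, rfl⟩ : ∃ m, n = v + 1 + m := ⟨n - (v + 1), by omega⟩
  have hchoose :
      ((v + 1 + m).choose (v + 1) : K) * (v + 1) = ((v + 1 + m).choose v) * (m + 1) := by
    have := Nat.choose_succ_right_eq (v + 1 + m) v
    rw [show v + 1 + m - v = m + 1 by omega] at this
    exact_mod_cast this
  rw [show v + 1 + m - (v + 1) = m by omega, show v + 1 + m - v = m + 1 by omega]
  have hm : (1 + m : K) ≠ 0 := by norm_cast; omega
  push_cast
  field_simp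
  linear_combination p ^ (v + 1) * q ^ (m + 1) * hchoose

theorem binomExp_div_one_add_sub (n : ℕ) {lam : ℝ} (hlam : lam ≠ 1) :
    binomExp n lam (fun v => (v : ℝ) / (1 + (n - v : ℕ))) =
      lam / (1 - lam) * (1 - lam ^ n) := by
  have hq : 1 - lam ≠ 0 := sub_ne_zero.mpr hlam.symm
  rw [binomExp, sum_range_succ',
    sum_congr rfl fun v hv => choose_succ_mul_pow_mul_div hq (mem_range.mp hv), ← mul_sum,
    sum_range_choose_mul_pow_mul_pow]
  simp

theorem binomial_ratio_expectation_general (n : ℕ) (lam : ℝ)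
    (hlam : lam ∈ Set.Ioo (0 : ℝ) 1) :
    binomExp n lam (fun v => (v : ℝ) / (1 + (n - v : ℕ))) ≤ lam / (1 - lam) := by
  obtain ⟨hpos, hlt⟩ := hlam
  rw [binomExp_div_one_add_sub n hlt.ne]
  exact mul_le_of_le_one_right (div_nonneg hpos.le (sub_pos.mpr hlt).le)
    (sub_le_self 1 (pow_nonneg hpos.le n))

/-- For `V ~ Bin(n, lam)` and `X = n - V`, `E(V/(1+X)) ≤ lam/(1-lam)`. -/
theorem binomial_ratio_expectation (n : ℕ) (hn : 1 ≤ n) (lam : ℝ)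
    (hlam : lam ∈ Set.Ioo (0 : ℝ) 1) :
    binomExp n lam (fun v => (v : ℝ) / (1 + (n - v : ℕ))) ≤ lam / (1 - lam) :=
  binomial_ratio_expectation_general n lam hlam
end

section
/- Let α ∈ (0,1), m ≥ 1, k ∈ {1,…,m}, and define the truncated Benjamini–Hochberg critical values β_{j:m}^{(k)} = (α/m) · min(j,k)/(∑_{i=1}^k 1/i). Then for any joint distribution of the p-values p_1,…,p_m under which each p_i with i ∈ I_0 is uniformly distributed on (0,1) (arbitrary dependence allowed), the step-up test given by R = max{j : p_{j:m} ≤ β_{j:m}^{(k)}} satisfies FDR = E(V/R) ≤ (m_0/m) α, where m_0 = |I_0| and V = ∑_{i ∈ I_0} 1{p_i ≤ β_{R:m}^{(k)}}. -/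
open MeasureTheory
open scoped Classical

/-- Number of rejections of the step-up test with critical values `α`. -/
noncomputable def stepUpR {m : ℕ} (α : ℕ → ℝ) (p : Fin m → ℝ) : ℕ :=
  ((Finset.Icc 1 m).filter fun j =>
    ∃ h : j - 1 < m, p (Tuple.sort p ⟨j - 1, h⟩) ≤ α j).sup id

/-- Telescoping sum over `Ico`. -/
lemma tele_aux (f : ℕ → ℝ) : ∀ (n a : ℕ),
    ∑ j ∈ Finset.Ico a (a + n), (f j - f (j + 1)) = f a - f (a + n) := by
  intro n
  induction n with
  | zero => simp
  | succ n ih =>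
    intro a
    rw [show a + (n + 1) = (a + n) + 1 from rfl, Finset.sum_Ico_succ_top (by omega), ih]
    ring

/-- The truncated Benjamini–Hochberg procedure with critical values
`β_j = (α/m)·min(j,k)/H_k` controls the FDR at level `(m_0/m)·α` under
arbitrary dependence of the p-values. -/
theorem truncated_BH_fdr_control {Ω : Type*} [MeasurableSpace Ω] (μ : Measure Ω)
    [IsProbabilityMeasure μ] (m k : ℕ) (hm : 1 ≤ m) (hk : 1 ≤ k) (hkm : k ≤ m)
    (alpha : ℝ) (halpha : alpha ∈ Set.Ioo (0 : ℝ) 1)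
    (I0 : Finset (Fin m)) (p : Ω → Fin m → ℝ)
    (hunif : ∀ i ∈ I0, ∀ t ∈ Set.Icc (0 : ℝ) 1, μ {ω | p ω i ≤ t} = ENNReal.ofReal t)
    (β : ℕ → ℝ)
    (hβ : ∀ j, β j = (alpha / m) * (min j k : ℕ) / ∑ i ∈ Finset.Icc 1 k, (1 : ℝ) / i) :
    (∫ ω, (if stepUpR β (p ω) = 0 then (0 : ℝ) else
        ((I0.filter fun i => p ω i ≤ β (stepUpR β (p ω))).card : ℝ) /
          (stepUpR β (p ω) : ℝ)) ∂μ) ≤ ((I0.card : ℝ) / m) * alpha := by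
  obtain ⟨hα0, hα1⟩ := halpha
  set H : ℝ := ∑ i ∈ Finset.Icc 1 k, (1 : ℝ) / i with hHdef
  have hm0 : (0 : ℝ) < m := by exact_mod_cast hm
  have hk0 : (0 : ℝ) < k := by exact_mod_cast hk
  have hH1 : (1 : ℝ) ≤ H := by
    have h1 : (1 : ℝ) / (1 : ℕ) ≤ H :=
      Finset.single_le_sum (f := fun i : ℕ => (1 : ℝ) / i)
        (fun i _ => by positivity) (by simp [hk])
    simpa using h1
  have hH0 : (0 : ℝ) < H := lt_of_lt_of_le one_pos hH1
  -- basic facts about β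
  have hβnn : ∀ j, 0 ≤ β j := by
    intro j; rw [hβ j]; positivity
  have hβle : ∀ j, β j ≤ 1 := by
    intro j
    rw [hβ j]
    have h1 : ((min j k : ℕ) : ℝ) ≤ m * H := by
      have : ((min j k : ℕ) : ℝ) ≤ (m : ℝ) := by
        exact_mod_cast le_trans (min_le_right j k) hkm
      calc ((min j k : ℕ) : ℝ) ≤ (m : ℝ) := this
        _ ≤ m * H := le_mul_of_one_le_right hm0.le hH1
    have h2 : alpha / m * (min j k : ℕ) / H ≤ alpha := by
      rw [div_le_iff₀ hH0, div_mul_eq_mul_div, div_le_iff₀ hm0]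
      calc alpha * ((min j k : ℕ) : ℝ) ≤ alpha * (m * H) :=
            mul_le_mul_of_nonneg_left h1 hα0.le
        _ = alpha * H * m := by ring
    exact h2.trans hα1.le
  have hβmono : ∀ j1 j2 : ℕ, j1 ≤ j2 → β j1 ≤ β j2 := by
    intro j1 j2 h
    rw [hβ j1, hβ j2]
    have : ((min j1 k : ℕ) : ℝ) ≤ ((min j2 k : ℕ) : ℝ) := by
      exact_mod_cast min_le_min h le_rfl
    gcongr
  -- nonnegativity of the RHS indicator sums
  have hite_nn : ∀ (P : Prop) [Decidable P] (c : ℝ), 0 ≤ c → 0 ≤ (if P then c else 0) := by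
    intro P _ c hc; split <;> simp [hc]
  -- the key pointwise (Döhler-type) inequality
  have key : ∀ (R : ℕ), R ≠ 0 → ∀ x : ℝ,
      (if x ≤ β R then 1 / (R : ℝ) else 0) ≤
        (if x ≤ β k then 1 / (k : ℝ) else 0) +
          ∑ j ∈ Finset.Icc 1 (k - 1),
            (if x ≤ β j then 1 / ((j : ℝ) * ((j : ℝ) + 1)) else 0) := by
    intro R hR x
    have hsum_nn : 0 ≤ ∑ j ∈ Finset.Icc 1 (k - 1),
        (if x ≤ β j then 1 / ((j : ℝ) * ((j : ℝ) + 1)) else 0) :=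
      Finset.sum_nonneg fun j _ => hite_nn _ _ (by positivity)
    by_cases hx : x ≤ β R
    · rw [if_pos hx]
      by_cases hRk : k ≤ R
      · have hβRk : β R = β k := by
          rw [hβ R, hβ k, min_eq_right hRk, min_self]
        have h1 : (1 : ℝ) / R ≤ 1 / k := by
          apply one_div_le_one_div_of_le hk0
          exact_mod_cast hRk
        rw [if_pos (hβRk ▸ hx)]
        linarith
      · push_neg at hRk
        have hR1 : 1 ≤ R := Nat.one_le_iff_ne_zero.mpr hR
        have hxk : x ≤ β k := hx.trans (hβmono R k hRk.le)
        rw [if_pos hxk]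
        -- telescoping part
        have htel : ∑ j ∈ Finset.Icc R (k - 1), (1 / ((j : ℝ) * ((j : ℝ) + 1))) =
            1 / (R : ℝ) - 1 / (k : ℝ) := by
          have hIcc : Finset.Icc R (k - 1) = Finset.Ico R k := by
            ext j; simp only [Finset.mem_Icc, Finset.mem_Ico]; omega
          rw [hIcc]
          have := tele_aux (fun j => 1 / (j : ℝ)) (k - R) R
          rw [show R + (k - R) = k by omega] at this
          rw [← this]
          apply Finset.sum_congr rfl
          intro j hj
          simp only [Finset.mem_Ico] at hj
          have hj0 : (0 : ℝ) < j := by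
            exact_mod_cast lt_of_lt_of_le (Nat.lt_of_lt_of_le Nat.zero_lt_one hR1) hj.1
          push_cast
          field_simp
          try ring
        have h2 : ∑ j ∈ Finset.Icc R (k - 1), (1 / ((j : ℝ) * ((j : ℝ) + 1))) ≤
            ∑ j ∈ Finset.Icc 1 (k - 1),
              (if x ≤ β j then 1 / ((j : ℝ) * ((j : ℝ) + 1)) else 0) := by
          calc ∑ j ∈ Finset.Icc R (k - 1), (1 / ((j : ℝ) * ((j : ℝ) + 1)))
              = ∑ j ∈ Finset.Icc R (k - 1),
                (if x ≤ β j then 1 / ((j : ℝ) * ((j : ℝ) + 1)) else 0) := by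
                apply Finset.sum_congr rfl
                intro j hj
                simp only [Finset.mem_Icc] at hj
                rw [if_pos (hx.trans (hβmono R j hj.1))]
            _ ≤ _ := by
                apply Finset.sum_le_sum_of_subset_of_nonneg
                · exact Finset.Icc_subset_Icc hR1 le_rfl
                · intro j _ _; exact hite_nn _ _ (by positivity)
        linarith
    · rw [if_neg hx]
      have : (0:ℝ) ≤ (if x ≤ β k then 1 / (k : ℝ) else 0) := hite_nn _ _ (by positivity)
      linarith
  -- names for the integrand
  set F : Ω → ℝ := fun ω => if stepUpR β (p ω) = 0 then (0 : ℝ) else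
      ((I0.filter fun i => p ω i ≤ β (stepUpR β (p ω))).card : ℝ) /
        (stepUpR β (p ω) : ℝ) with hFdef
  have hFnn : ∀ ω, 0 ≤ F ω := by
    intro ω
    rw [hFdef]
    dsimp only
    split
    · exact le_rfl
    · positivity
  have hRHSnn : (0 : ℝ) ≤ ((I0.card : ℝ) / m) * alpha := by positivity
  by_cases hInt : Integrable F μ
  swap
  · rw [show (∫ ω, (if stepUpR β (p ω) = 0 then (0 : ℝ) else
        ((I0.filter fun i => p ω i ≤ β (stepUpR β (p ω))).card : ℝ) /
          (stepUpR β (p ω) : ℝ)) ∂μ) = ∫ ω, F ω ∂μ from rfl, integral_undef hInt]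
    exact hRHSnn
  -- measurable hulls of the events
  set T : Fin m → ℕ → Set Ω := fun i j => toMeasurable μ {ω | p ω i ≤ β j} with hTdef
  have hTmeas : ∀ i j, MeasurableSet (T i j) := fun i j => measurableSet_toMeasurable _ _
  have hμT : ∀ i ∈ I0, ∀ j, μ (T i j) = ENNReal.ofReal (β j) := by
    intro i hi j
    rw [hTdef]
    dsimp only
    rw [measure_toMeasurable]
    exact hunif i hi (β j) ⟨hβnn j, hβle j⟩
  -- the ENNReal-valued dominating function
  set G : Ω → ENNReal := fun ω => ∑ i ∈ I0,
      ((T i k).indicator (fun _ => ENNReal.ofReal (1 / (k : ℝ))) ω +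
        ∑ j ∈ Finset.Icc 1 (k - 1),
          (T i j).indicator (fun _ => ENNReal.ofReal (1 / ((j : ℝ) * ((j : ℝ) + 1)))) ω)
      with hGdef
  -- pointwise domination
  have hpt : ∀ ω, ENNReal.ofReal (F ω) ≤ G ω := by
    intro ω
    set R := stepUpR β (p ω) with hRdef
    by_cases hR : R = 0
    · rw [hFdef]
      simp only [← hRdef, hR, if_pos]
      simp
    · -- real-valued intermediate bound
      have hcard : F ω = ∑ i ∈ I0, (if p ω i ≤ β R then 1 / (R : ℝ) else 0) := by
        have h1 : F ω = ((I0.filter fun i => p ω i ≤ β R).card : ℝ) / (R : ℝ) := if_neg hR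
        rw [h1, Finset.card_filter]
        push_cast
        rw [Finset.sum_div]
        exact Finset.sum_congr rfl fun i _ => by split <;> simp
      have hreal : F ω ≤ ∑ i ∈ I0, ((if p ω i ≤ β k then 1 / (k : ℝ) else 0) +
          ∑ j ∈ Finset.Icc 1 (k - 1),
            (if p ω i ≤ β j then 1 / ((j : ℝ) * ((j : ℝ) + 1)) else 0)) := by
        rw [hcard]
        exact Finset.sum_le_sum fun i _ => key R hR (p ω i)
      refine le_trans (ENNReal.ofReal_le_ofReal hreal) ?_
      rw [ENNReal.ofReal_sum_of_nonneg (fun i _ => by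
        exact add_nonneg (hite_nn _ _ (by positivity))
          (Finset.sum_nonneg fun j _ => hite_nn _ _ (by positivity)))]
      rw [hGdef]
      apply Finset.sum_le_sum
      intro i _
      rw [ENNReal.ofReal_add (hite_nn _ _ (by positivity))
        (Finset.sum_nonneg fun j _ => hite_nn _ _ (by positivity))]
      apply add_le_add
      · split
        next h =>
          have hmem : ω ∈ T i k := subset_toMeasurable μ _ h
          rw [Set.indicator_of_mem hmem]
        next h => simp
      · rw [ENNReal.ofReal_sum_of_nonneg (fun j _ => hite_nn _ _ (by positivity))]
        apply Finset.sum_le_sum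
        intro j _
        split
        next h =>
          have hmem : ω ∈ T i j := subset_toMeasurable μ _ h
          rw [Set.indicator_of_mem hmem]
        next h => simp
  -- compute the integral of G
  have hGmeas : ∀ i ∈ I0, Measurable fun ω =>
      (T i k).indicator (fun _ => ENNReal.ofReal (1 / (k : ℝ))) ω +
        ∑ j ∈ Finset.Icc 1 (k - 1),
          (T i j).indicator (fun _ => ENNReal.ofReal (1 / ((j : ℝ) * ((j : ℝ) + 1)))) ω := by
    intro i _
    apply Measurable.add
    · exact measurable_const.indicator (hTmeas i k)
    · exact Finset.measurable_sum _ fun j _ => measurable_const.indicator (hTmeas i j)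
  -- the per-index real identity
  have hterm : (1 / (k : ℝ)) * β k + ∑ j ∈ Finset.Icc 1 (k - 1),
      (1 / ((j : ℝ) * ((j : ℝ) + 1))) * β j = alpha / m := by
    have hsplit : H = 1 + ∑ j ∈ Finset.Icc 1 (k - 1), (1 : ℝ) / ((j : ℝ) + 1) := by
      have hins : Finset.Icc 1 k = insert 1 (Finset.Icc 2 k) := by
        ext j; simp [Finset.mem_Icc, Finset.mem_insert]; omega
      have hmap : Finset.Icc 2 k = Finset.map (addRightEmbedding 1) (Finset.Icc 1 (k - 1)) := by
        rw [Finset.map_add_right_Icc]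
        congr 1
        omega
      rw [hHdef, hins, Finset.sum_insert (by simp), hmap, Finset.sum_map]
      simp only [addRightEmbedding_apply]
      push_cast
      norm_num
    have hβk : β k = alpha / m * k / H := by rw [hβ k, min_self]
    have hβj : ∀ j ∈ Finset.Icc 1 (k - 1),
        (1 / ((j : ℝ) * ((j : ℝ) + 1))) * β j = (alpha / m / H) * (1 / ((j : ℝ) + 1)) := by
      intro j hj
      simp only [Finset.mem_Icc] at hj
      have hjk : min j k = j := min_eq_left (by omega)
      have hj0 : (0 : ℝ) < j := by exact_mod_cast (by omega : 0 < j)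
      rw [hβ j, hjk]
      field_simp
    rw [Finset.sum_congr rfl hβj, ← Finset.mul_sum, hβk]
    have hkne : (k : ℝ) ≠ 0 := hk0.ne'
    have hHne : H ≠ 0 := hH0.ne'
    have : ∑ j ∈ Finset.Icc 1 (k - 1), (1 : ℝ) / ((j : ℝ) + 1) = H - 1 := by
      linarith [hsplit]
    rw [this]
    field_simp
    ring
  -- lintegral of G
  have hGint : ∫⁻ ω, G ω ∂μ = (I0.card : ENNReal) * ENNReal.ofReal (alpha / m) := by
    rw [hGdef]
    rw [lintegral_finset_sum _ (fun i hi => hGmeas i hi)]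
    have hper : ∀ i ∈ I0, (∫⁻ ω, ((T i k).indicator (fun _ => ENNReal.ofReal (1 / (k : ℝ))) ω +
        ∑ j ∈ Finset.Icc 1 (k - 1),
          (T i j).indicator (fun _ => ENNReal.ofReal (1 / ((j : ℝ) * ((j : ℝ) + 1)))) ω) ∂μ)
        = ENNReal.ofReal (alpha / m) := by
      intro i hi
      rw [lintegral_add_left (measurable_const.indicator (hTmeas i k))]
      rw [lintegral_finset_sum _ (fun j _ => measurable_const.indicator (hTmeas i j))]
      rw [lintegral_indicator_const (hTmeas i k)]
      have hj' : ∀ j ∈ Finset.Icc 1 (k - 1),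
          (∫⁻ ω, (T i j).indicator (fun _ => ENNReal.ofReal (1 / ((j : ℝ) * ((j : ℝ) + 1)))) ω ∂μ)
          = ENNReal.ofReal ((1 / ((j : ℝ) * ((j : ℝ) + 1))) * β j) := by
        intro j _
        rw [lintegral_indicator_const (hTmeas i j), hμT i hi j,
          ← ENNReal.ofReal_mul (by positivity)]
      rw [Finset.sum_congr rfl hj', hμT i hi k, ← ENNReal.ofReal_mul (by positivity),
        ← ENNReal.ofReal_sum_of_nonneg (fun j _ => mul_nonneg (by positivity) (hβnn j)),
        ← ENNReal.ofReal_add (mul_nonneg (by positivity) (hβnn k))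
          (Finset.sum_nonneg fun j _ => mul_nonneg (by positivity) (hβnn j)),
        hterm]
    rw [Finset.sum_congr rfl hper, Finset.sum_const, nsmul_eq_mul]
  -- put things together
  have hbound : ∫⁻ ω, ENNReal.ofReal (F ω) ∂μ ≤
      (I0.card : ENNReal) * ENNReal.ofReal (alpha / m) := by
    rw [← hGint]
    exact lintegral_mono hpt
  have hfin : (I0.card : ENNReal) * ENNReal.ofReal (alpha / m) ≠ ⊤ :=
    ENNReal.mul_ne_top (ENNReal.natCast_ne_top _) ENNReal.ofReal_ne_top
  have heq : (∫ ω, F ω ∂μ) = (∫⁻ ω, ENNReal.ofReal (F ω) ∂μ).toReal :=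
    integral_eq_lintegral_of_nonneg_ae (Filter.Eventually.of_forall hFnn)
      hInt.aestronglyMeasurable
  rw [show (∫ ω, (if stepUpR β (p ω) = 0 then (0 : ℝ) else
        ((I0.filter fun i => p ω i ≤ β (stepUpR β (p ω))).card : ℝ) /
          (stepUpR β (p ω) : ℝ)) ∂μ) = ∫ ω, F ω ∂μ from rfl, heq]
  calc (∫⁻ ω, ENNReal.ofReal (F ω) ∂μ).toReal
      ≤ ((I0.card : ENNReal) * ENNReal.ofReal (alpha / m)).toReal :=
        ENNReal.toReal_mono hfin hbound
    _ = (I0.card : ℝ) * (alpha / m) := by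
        rw [ENNReal.toReal_mul, ENNReal.toReal_natCast, ENNReal.toReal_ofReal (by positivity)]
    _ = ((I0.card : ℝ) / m) * alpha := by ring
end
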